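/- The pair ([0,1], σ) with σ the folding map is essentially free: for all m ≠ n in ℕ there is no nonempty open subset W of dom(T^m) ∩ dom(T^n) on which T^m and T^n agree, where T is the restriction of σ to points whose relevant iterates avoid 1/2. -/

import Mathlib

/-!
On each side of `1/2` the folding map is affine with slope `±2`, so an interval on which the
first `m` iterates avoid `1/2` is stretched by exactly `2 ^ m`. If `T^m` and `T^n` agree on a
relatively open set, they agree at the endpoints of a nondegenerate interval inside it, and
comparing stretching factors gives `2 ^ m = 2 ^ n`.
-/

/-- The folding (tent) map on the unit interval. -/
noncomputable def fold (t : ℝ) : ℝ := min (2 * t) (2 - 2 * t)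

/-- The domain of the n-th iterate of T = fold restricted to [0,1] \ {1/2}:
points of [0,1] whose first n iterates avoid 1/2. -/
noncomputable def domFold (n : ℕ) : Set ℝ :=
  {t ∈ Set.Icc 0 1 | ∀ k < n, fold^[k] t ≠ 1 / 2}

open Set

lemma continuous_fold : Continuous fold := by
  unfold fold; fun_prop

lemma fold_of_le_half {t : ℝ} (ht : t ≤ 1 / 2) : fold t = 2 * t :=
  min_eq_left (by linarith)

lemma fold_of_half_le {t : ℝ} (ht : 1 / 2 ≤ t) : fold t = 2 - 2 * t :=
  min_eq_right (by linarith)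

lemma fold_mem_Icc {t : ℝ} (ht : t ∈ Icc (0 : ℝ) 1) : fold t ∈ Icc (0 : ℝ) 1 := by
  rcases le_total t (1 / 2) with h | h
  · rw [fold_of_le_half h]; constructor <;> linarith [ht.1]
  · rw [fold_of_half_le h]; constructor <;> linarith [ht.2]

lemma abs_fold_sub_fold {a b : ℝ} (hab : (1 / 2 : ℝ) ∉ uIcc a b) :
    |fold b - fold a| = 2 * |b - a| := by
  rcases le_total (1 / 2 : ℝ) a with ha | ha <;> rcases le_total (1 / 2 : ℝ) b with hb | hb
  · rw [fold_of_half_le ha, fold_of_half_le hb, ← abs_two, ← abs_mul, abs_sub_comm]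
    ring_nf
  · exact absurd (mem_uIcc.2 (Or.inr ⟨hb, ha⟩)) hab
  · exact absurd (mem_uIcc.2 (Or.inl ⟨ha, hb⟩)) hab
  · rw [fold_of_le_half ha, fold_of_le_half hb, ← abs_two, ← abs_mul]
    ring_nf

lemma image_fold_subset_domFold {s : Set ℝ} {m : ℕ} (hs : s ⊆ domFold (m + 1)) :
    fold '' s ⊆ domFold m := by
  rintro _ ⟨t, ht, rfl⟩
  refine ⟨fold_mem_Icc (hs ht).1, fun k hk => ?_⟩
  rw [← Function.iterate_succ_apply]
  exact (hs ht).2 (k + 1) (by omega)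

lemma abs_fold_iterate_sub {m : ℕ} {a b : ℝ} (hab : uIcc a b ⊆ domFold m) :
    |fold^[m] b - fold^[m] a| = 2 ^ m * |b - a| := by
  induction m generalizing a b with
  | zero => simp
  | succ m ih =>
    have half_not_mem : (1 / 2 : ℝ) ∉ uIcc a b := fun h => (hab h).2 0 m.succ_pos rfl
    have image_sub : uIcc (fold a) (fold b) ⊆ domFold m :=
      (intermediate_value_uIcc continuous_fold.continuousOn).trans
        (image_fold_subset_domFold hab)
    rw [Function.iterate_succ_apply, Function.iterate_succ_apply, ih image_sub,
      abs_fold_sub_fold half_not_mem, pow_succ, mul_assoc]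

lemma IsOpen.exists_Icc_subset_inter_Icc {V : Set ℝ} (hV : IsOpen V) {p q : ℝ} (hpq : p < q)
    (hne : (V ∩ Icc p q).Nonempty) : ∃ a b, a < b ∧ Icc a b ⊆ V ∩ Icc p q := by
  obtain ⟨t, htV, htpq⟩ := hne
  have hopen : (V ∩ Ioo p q).Nonempty :=
    mem_closure_iff.1 (by rwa [closure_Ioo hpq.ne]) V hV htV
  obtain ⟨a, b, hab, hsub⟩ := (hV.inter isOpen_Ioo).exists_Ioo_subset hopen
  obtain ⟨c, hac, hcb⟩ := exists_between hab
  obtain ⟨d, hcd, hdb⟩ := exists_between hcb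
  refine ⟨c, d, hcd, fun x hx => ?_⟩
  obtain ⟨hxV, hxpq⟩ := hsub (Icc_subset_Ioo hac hdb hx)
  exact ⟨hxV, Ioo_subset_Icc_self hxpq⟩

/-- The pair ([0,1], fold) is essentially free: if T^m and T^n agree on a nonempty
relatively open subset of dom(T^m) ∩ dom(T^n) (open in the subspace [0,1]), then m = n. -/
theorem fold_essentially_free (m n : ℕ)
    (h : ∃ V : Set ℝ, IsOpen V ∧ (V ∩ Set.Icc 0 1).Nonempty ∧
      V ∩ Set.Icc 0 1 ⊆ domFold m ∩ domFold n ∧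
      ∀ t ∈ V ∩ Set.Icc 0 1, fold^[m] t = fold^[n] t) :
    m = n := by
  obtain ⟨V, hV, hne, hdom, heq⟩ := h
  obtain ⟨a, b, hab, hsub⟩ := hV.exists_Icc_subset_inter_Icc zero_lt_one hne
  have hdom' : uIcc a b ⊆ domFold m ∩ domFold n := by
    rw [uIcc_of_le hab.le]; exact hsub.trans hdom
  have hpow : (2 : ℝ) ^ m * |b - a| = 2 ^ n * |b - a| := by
    rw [← abs_fold_iterate_sub (hdom'.trans inter_subset_left),
      ← abs_fold_iterate_sub (hdom'.trans inter_subset_right),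
      heq a (hsub (left_mem_Icc.2 hab.le)), heq b (hsub (right_mem_Icc.2 hab.le))]
  have hba : |b - a| ≠ 0 := abs_ne_zero.2 (sub_ne_zero.2 hab.ne')
  exact pow_right_injective₀ two_pos (by norm_num) (mul_right_cancel₀ hba hpow)
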